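/- arXiv:1412.0543 — 3 statements merged into one kernel-verified Lean document; each statement's English description precedes it below -/
import Mathlib

section
/- Let A = [a,b] ⊂ ℝ be a compact interval, let D ≥ 1, let 0 < ε ≤ 4D, and let p, q : A → ℝ each be Lipschitz with constant D. Suppose there is x* ∈ A with p(x*) − q(x*) > ε and [x* − ε/(4D), x* + ε/(4D)] ⊆ A. Then there exists g : A → ℝ with sup_{x∈A} |g(x)| + Lip(g) ≤ 1 such that ∫_A g(x)(p(x) − q(x)) dx ≥ ε³/(64D²); in particular ‖P − Q‖_BL ≥ ε³/(64D²), where P and Q are the signed measures with Lebesgue densities p and q. -/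
/-!
Since `p` and `q` are `D`-Lipschitz, the gap `p - q > ε` at `x*` survives as `p - q ≥ ε / 2`
on the interval of radius `r = ε / (4D)` around `x*`. The tent of slope `1/2` and height `r / 2`
over that interval is a bounded Lipschitz test function (as `r ≤ 1`), and integrating it
against `p - q` gives at least `ε / 2` times its area `r² / 2`, which is `ε³ / (64 D²)`.
-/

open MeasureTheory Set

/-- A test function for the bounded Lipschitz norm on the interval `[a, b]`:
`g` satisfies `sup_{x ∈ [a,b]} |g(x)| + Lip(g) ≤ 1`, expressed via a sup-bound `c`
and a Lipschitz constant `L` on `[a,b]` with `c + L ≤ 1`. -/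
def IsBLTestOn (a b : ℝ) (g : ℝ → ℝ) : Prop :=
  ∃ c L : ℝ, 0 ≤ c ∧ 0 ≤ L ∧ c + L ≤ 1 ∧
    (∀ x ∈ Icc a b, |g x| ≤ c) ∧
    (∀ x ∈ Icc a b, ∀ y ∈ Icc a b, |g x - g y| ≤ L * |x - y|)

/-- The bounded Lipschitz norm `‖P - Q‖_BL` of the difference of the signed measures
`P`, `Q` on `[a,b]` with Lebesgue densities `p`, `q`:
`sup { |∫_{[a,b]} g·(p - q) dx| : sup|g| + Lip(g) ≤ 1 }`. -/
noncomputable def blNormDiff (a b : ℝ) (p q : ℝ → ℝ) : ℝ :=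
  sSup {r : ℝ | ∃ g : ℝ → ℝ, IsBLTestOn a b g ∧
    r = |∫ x in Icc a b, g x * (p x - q x)|}

/-- The witness `max 0 (ε / (8D) - |x - x*| / 2)` is `tent x* (ε / (4D))`. -/
noncomputable def tent (c r x : ℝ) : ℝ := max 0 ((r - |x - c|) / 2)

section Tent

variable {c r : ℝ}

lemma tent_nonneg (c r x : ℝ) : 0 ≤ tent c r x := le_max_left _ _

lemma tent_le (hr : 0 ≤ r) (x : ℝ) : tent c r x ≤ r / 2 :=
  max_le (by positivity) (by linarith [abs_nonneg (x - c)])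

lemma tent_eq_zero_of_le {x : ℝ} (h : r ≤ |x - c|) : tent c r x = 0 :=
  max_eq_left (by linarith)

lemma tent_eq_of_abs_sub_le {x : ℝ} (h : |x - c| ≤ r) : tent c r x = (r - |x - c|) / 2 :=
  max_eq_right (by linarith)

lemma lipschitzWith_tent (c r : ℝ) : LipschitzWith (1 / 2) (tent c r) := by
  refine LipschitzWith.of_dist_le_mul fun x y => ?_
  simp only [Real.dist_eq, tent, max_comm (0 : ℝ)]
  calc |max ((r - |x - c|) / 2) 0 - max ((r - |y - c|) / 2) 0|
      ≤ |(r - |x - c|) / 2 - (r - |y - c|) / 2| := abs_max_sub_max_le_abs _ _ _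
    _ = |(|y - c| - |x - c|)| / 2 := by
      rw [show (r - |x - c|) / 2 - (r - |y - c|) / 2 = (|y - c| - |x - c|) / 2 by ring, abs_div,
        abs_two]
    _ ≤ |(y - c) - (x - c)| / 2 :=
      (div_le_div_iff_of_pos_right two_pos).2 (abs_abs_sub_abs_le_abs_sub _ _)
    _ = 1 / 2 * |x - y| := by rw [sub_sub_sub_cancel_right, abs_sub_comm]; ring

lemma continuous_tent (c r : ℝ) : Continuous (tent c r) := (lipschitzWith_tent c r).continuous

lemma integral_tent (c : ℝ) (hr : 0 ≤ r) :
    ∫ x in Icc (c - r) (c + r), tent c r x = r ^ 2 / 2 := by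
  rw [integral_Icc_eq_integral_Ioc, ← intervalIntegral.integral_of_le (by linarith),
    ← intervalIntegral.integral_add_adjacent_intervals (b := c)
      ((continuous_tent c r).intervalIntegrable _ _) ((continuous_tent c r).intervalIntegrable _ _)]
  have hleft : ∫ x in (c - r)..c, tent c r x = ∫ x in (c - r)..c, (x - (c - r)) / 2 := by
    refine intervalIntegral.integral_congr fun x hx => ?_
    rw [uIcc_of_le (by linarith)] at hx
    rw [tent_eq_of_abs_sub_le (by rw [abs_of_nonpos (by linarith [hx.2])]; linarith [hx.1]),
      abs_of_nonpos (by linarith [hx.2])]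
    ring
  have hright : ∫ x in c..(c + r), tent c r x = ∫ x in c..(c + r), (c + r - x) / 2 := by
    refine intervalIntegral.integral_congr fun x hx => ?_
    rw [uIcc_of_le (by linarith)] at hx
    rw [tent_eq_of_abs_sub_le (by rw [abs_of_nonneg (by linarith [hx.1])]; linarith [hx.2]),
      abs_of_nonneg (by linarith [hx.1])]
    ring
  rw [hleft, hright]
  simp [intervalIntegral.integral_comp_sub_left (fun x : ℝ => x)]
  ring

lemma isBLTestOn_tent (a b c : ℝ) (hr0 : 0 ≤ r) (hr1 : r ≤ 1) : IsBLTestOn a b (tent c r) :=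
  ⟨r / 2, 1 / 2, by positivity, by norm_num, by linarith,
    fun x _ => (abs_of_nonneg (tent_nonneg c r x)).trans_le (tent_le hr0 x),
    fun x _ y _ => by simpa [Real.dist_eq] using (lipschitzWith_tent c r).dist_le_mul x y⟩

end Tent

lemma continuousOn_of_abs_sub_le_mul {s : Set ℝ} {f : ℝ → ℝ} {K : ℝ}
    (hf : ∀ x ∈ s, ∀ y ∈ s, |f x - f y| ≤ K * |x - y|) : ContinuousOn f s := by
  refine (LipschitzOnWith.of_dist_le_mul (K := K.toNNReal) fun x hx y hy => ?_).continuousOn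
  rw [Real.dist_eq, Real.dist_eq, Real.coe_toNNReal']
  exact (hf x hx y hy).trans (mul_le_mul_of_nonneg_right (le_max_left _ _) (abs_nonneg _))

lemma mul_sq_div_two_le_integral_tent_mul {a b c r m : ℝ} {f : ℝ → ℝ} (hr : 0 ≤ r) (hm : 0 ≤ m)
    (hf : ContinuousOn f (Icc a b)) (hsub : Icc (c - r) (c + r) ⊆ Icc a b)
    (hfm : ∀ x ∈ Icc (c - r) (c + r), m ≤ f x) :
    m * (r ^ 2 / 2) ≤ ∫ x in Icc a b, tent c r x * f x := by
  have hpointwise : ∀ x ∈ Icc a b, m * tent c r x ≤ tent c r x * f x := by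
    intro x _
    rcases le_or_gt r |x - c| with hfar | hnear
    · simp [tent_eq_zero_of_le hfar]
    · obtain ⟨hlo, hhi⟩ := abs_lt.1 hnear
      rw [mul_comm]
      exact mul_le_mul_of_nonneg_left (hfm x ⟨by linarith, by linarith⟩) (tent_nonneg c r x)
  calc m * (r ^ 2 / 2) = m * ∫ x in Icc (c - r) (c + r), tent c r x := by rw [integral_tent c hr]
    _ ≤ m * ∫ x in Icc a b, tent c r x :=
      mul_le_mul_of_nonneg_left (setIntegral_mono_set (continuous_tent c r).integrableOn_Icc
        (.of_forall (tent_nonneg c r)) hsub.eventuallyLE) hm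
    _ = ∫ x in Icc a b, m * tent c r x := (integral_const_mul _ _).symm
    _ ≤ ∫ x in Icc a b, tent c r x * f x :=
      setIntegral_mono_on ((continuous_tent c r).const_smul m).integrableOn_Icc
        (((continuous_tent c r).continuousOn.mul hf).integrableOn_Icc) measurableSet_Icc hpointwise

lemma abs_integral_le_blNormDiff {a b : ℝ} {p q g : ℝ → ℝ}
    (hpq : ContinuousOn (fun x => p x - q x) (Icc a b)) (hg : IsBLTestOn a b g) :
    |∫ x in Icc a b, g x * (p x - q x)| ≤ blNormDiff a b p q := by
  obtain ⟨M, hM⟩ := isCompact_Icc.exists_bound_of_continuousOn hpq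
  refine le_csSup ⟨M * volume.real (Icc a b), ?_⟩ ⟨g, hg, rfl⟩
  rintro _ ⟨g', ⟨c, L, -, hL, hcL, hg'c, -⟩, rfl⟩
  have hbound : ∀ x ∈ Icc a b, ‖g' x * (p x - q x)‖ ≤ M := fun x hx => by
    rw [norm_mul, Real.norm_eq_abs]
    calc |g' x| * ‖p x - q x‖ ≤ 1 * M :=
          mul_le_mul (by linarith [hg'c x hx]) (hM x hx) (norm_nonneg _) zero_le_one
      _ = M := one_mul M
  simpa only [Real.norm_eq_abs] using norm_setIntegral_le_of_norm_le_const measure_Icc_lt_top hbound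

lemma sub_sub_mul_abs_le_sub {s : Set ℝ} {p q : ℝ → ℝ} {D x y : ℝ}
    (hp : ∀ x ∈ s, ∀ y ∈ s, |p x - p y| ≤ D * |x - y|)
    (hq : ∀ x ∈ s, ∀ y ∈ s, |q x - q y| ≤ D * |x - y|) (hx : x ∈ s) (hy : y ∈ s) :
    p y - q y - 2 * (D * |x - y|) ≤ p x - q x := by
  linarith [(abs_le.1 (hp x hx y hy)).1, (abs_le.1 (hq x hx y hy)).2]

theorem stmt_6_general {a b D ε xs : ℝ}
    (hε : 0 < ε) (hε' : ε ≤ 4 * D) {p q : ℝ → ℝ}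
    (hplip : ∀ x ∈ Icc a b, ∀ y ∈ Icc a b, |p x - p y| ≤ D * |x - y|)
    (hqlip : ∀ x ∈ Icc a b, ∀ y ∈ Icc a b, |q x - q y| ≤ D * |x - y|)
    (hgap : p xs - q xs > ε)
    (hsub : Icc (xs - ε / (4 * D)) (xs + ε / (4 * D)) ⊆ Icc a b) :
    ∃ g : ℝ → ℝ, IsBLTestOn a b g ∧
      ε ^ 3 / (64 * D ^ 2) ≤ ∫ x in Icc a b, g x * (p x - q x) ∧
      ε ^ 3 / (64 * D ^ 2) ≤ blNormDiff a b p q := by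
  have hD : 0 < D := by linarith
  set r := ε / (4 * D) with hr
  have hr0 : 0 ≤ r := by positivity
  have hr1 : r ≤ 1 := (div_le_one (by positivity)).2 hε'
  have hxs : xs ∈ Icc a b := hsub ⟨by linarith, by linarith⟩
  have hpq : ContinuousOn (fun x => p x - q x) (Icc a b) :=
    (continuousOn_of_abs_sub_le_mul hplip).sub (continuousOn_of_abs_sub_le_mul hqlip)
  have hgap_near : ∀ x ∈ Icc (xs - r) (xs + r), ε / 2 ≤ p x - q x := by
    intro x hx
    have hdist : D * |x - xs| ≤ ε / 4 := calc
      D * |x - xs| ≤ D * r :=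
        mul_le_mul_of_nonneg_left (abs_sub_le_iff.2 ⟨by linarith [hx.2], by linarith [hx.1]⟩) hD.le
      _ = ε / 4 := by rw [hr]; field_simp
    linarith [sub_sub_mul_abs_le_sub hplip hqlip (hsub hx) hxs]
  have hintegral : ε ^ 3 / (64 * D ^ 2) ≤ ∫ x in Icc a b, tent xs r x * (p x - q x) := calc
    ε ^ 3 / (64 * D ^ 2) = ε / 2 * (r ^ 2 / 2) := by rw [hr]; field_simp; ring
    _ ≤ _ := mul_sq_div_two_le_integral_tent_mul hr0 (by positivity) hpq hsub hgap_near
  have htest := isBLTestOn_tent a b xs hr0 hr1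
  exact ⟨tent xs r, htest, hintegral,
    hintegral.trans ((le_abs_self _).trans (abs_integral_le_blNormDiff hpq htest))⟩

/-- If `p, q` are `D`-Lipschitz on `[a,b]` and `p(x*) - q(x*) > ε` at a point `x*` with
`[x* - ε/(4D), x* + ε/(4D)] ⊆ [a,b]`, then there is a BL test function `g` with
`∫ g·(p - q) ≥ ε³/(64D²)`; in particular `‖P - Q‖_BL ≥ ε³/(64D²)`, where `P`, `Q` are
the signed measures with Lebesgue densities `p`, `q`. -/
theorem stmt_6 {a b D ε xs : ℝ} (hab : a < b) (hD : 1 ≤ D)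
    (hε : 0 < ε) (hε' : ε ≤ 4 * D) {p q : ℝ → ℝ}
    (hplip : ∀ x ∈ Icc a b, ∀ y ∈ Icc a b, |p x - p y| ≤ D * |x - y|)
    (hqlip : ∀ x ∈ Icc a b, ∀ y ∈ Icc a b, |q x - q y| ≤ D * |x - y|)
    (hxs : xs ∈ Icc a b) (hgap : p xs - q xs > ε)
    (hsub : Icc (xs - ε / (4 * D)) (xs + ε / (4 * D)) ⊆ Icc a b) :
    ∃ g : ℝ → ℝ, IsBLTestOn a b g ∧
      ε ^ 3 / (64 * D ^ 2) ≤ ∫ x in Icc a b, g x * (p x - q x) ∧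
      ε ^ 3 / (64 * D ^ 2) ≤ blNormDiff a b p q :=
  stmt_6_general hε hε' hplip hqlip hgap hsub
end

section
/- Let A = [a,b] ⊂ ℝ be a compact interval with a < b, let η > 0, let D ≥ 1, let u : A → ℝ be bounded and measurable with logit density l, and let p be a class-D density on A. Define p_t = p + t(l − p) and f(t) = ∫_A u(x) p_t(x) dx + η ν(p_t). Then f has derivative at t = 0 equal to f'(0) = η (KL(l‖p) + KL(p‖l)); in particular f'(0) ≥ 0, with f'(0) = 0 if and only if p = l Lebesgue-almost everywhere. -/
open MeasureTheory Set

/-- The logit density with noise level `η` of a payoff function `u` on the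
compact interval `A = [a, b]`:  `l(x) = exp(u(x)/η) / ∫_A exp(u(y)/η) dy`. -/
noncomputable def logitDensity (a b η : ℝ) (u : ℝ → ℝ) (x : ℝ) : ℝ :=
  Real.exp (u x / η) / ∫ y in Icc a b, Real.exp (u y / η)

/-- `p` is a class-`D` density on `[a,b]`: `D⁻¹ ≤ p ≤ D` on `[a,b]`, `p` is
`D`-Lipschitz on `[a,b]`, and `∫_{[a,b]} p = 1`. -/
def IsClassDDensity (a b D : ℝ) (p : ℝ → ℝ) : Prop :=
  (∀ x ∈ Icc a b, D⁻¹ ≤ p x ∧ p x ≤ D) ∧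
    (∀ x ∈ Icc a b, ∀ y ∈ Icc a b, |p x - p y| ≤ D * |x - y|) ∧
    (∫ x in Icc a b, p x) = 1

/-- The Kullback–Leibler divergence `KL(p‖q) = ∫_{[a,b]} p log(p/q)` between
densities `p`, `q` on the compact interval `[a,b]`. -/
noncomputable def klDiv' (a b : ℝ) (p q : ℝ → ℝ) : ℝ :=
  ∫ x in Icc a b, p x * Real.log (p x / q x)

/-! Along `p_t = p + t (l - p)` the densities stay in a fixed compact subinterval of `(0, ∞)`
for small `|t|`, so `t ↦ ∫ p_t log p_t` can be differentiated under the integral sign, with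
derivative `∫ (log p + 1)(l - p)` at `0`; the `+ 1` integrates to zero because `p` and `l` have
the same mass. Since `u = η log l + η log Z`, the payoff term contributes `η ∫ log l (l - p)`,
so `f'(0) = η ∫ (log l - log p)(l - p)`, which is the symmetrised Kullback–Leibler divergence.
Its integrand is nonnegative by monotonicity of `log` and vanishes exactly where `p = l`. -/

open Real Filter Topology
open scoped ENNReal

lemma add_mul_sub_mem_Icc {c C y z t : ℝ} (hc : 0 < c) (hy : y ∈ Icc c C) (hz : z ∈ Icc c C)
    (ht : |t| * C < c / 2) : y + t * (z - y) ∈ Icc (c / 2) (C + c / 2) := by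
  have hzy : |z - y| ≤ C := abs_sub_le_iff.2 ⟨by linarith [hz.2, hy.1], by linarith [hy.2, hz.1]⟩
  have hshift : |t * (z - y)| < c / 2 := by
    rw [abs_mul]
    exact (mul_le_mul_of_nonneg_left hzy (abs_nonneg t)).trans_lt ht
  obtain ⟨hlo, hhi⟩ := abs_lt.1 hshift
  constructor <;> linarith [hy.1, hy.2]

lemma abs_log_le_of_mem_Icc {m M y : ℝ} (hm : 0 < m) (hy : y ∈ Icc m M) :
    |log y| ≤ max |log m| |log M| :=
  abs_le_max_abs_abs (log_le_log hm hy.1) (log_le_log (hm.trans_le hy.1) hy.2)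

lemma log_sub_log_mul_sub_nonneg {y z : ℝ} (hy : 0 < y) (hz : 0 < z) :
    0 ≤ (log y - log z) * (y - z) := by
  rcases le_total z y with h | h
  · exact mul_nonneg (sub_nonneg.2 (log_le_log hz h)) (sub_nonneg.2 h)
  · exact mul_nonneg_of_nonpos_of_nonpos (sub_nonpos.2 (log_le_log hy h)) (sub_nonpos.2 h)

lemma log_sub_log_mul_sub_eq_zero_iff {y z : ℝ} (hy : 0 < y) (hz : 0 < z) :
    (log y - log z) * (y - z) = 0 ↔ y = z := by
  rw [mul_eq_zero, sub_eq_zero, sub_eq_zero, or_iff_right_of_imp]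
  exact log_injOn_pos hy hz

lemma exp_div_mem_Icc {η M v : ℝ} (hη : 0 < η) (hv : |v| ≤ M) :
    exp (v / η) ∈ Icc (exp (-M / η)) (exp (M / η)) :=
  ⟨exp_le_exp.2 (div_le_div_of_nonneg_right (abs_le.1 hv).1 hη.le),
    exp_le_exp.2 (div_le_div_of_nonneg_right (abs_le.1 hv).2 hη.le)⟩

section Densities

variable {α : Type*} [MeasurableSpace α] {μ : Measure α}

lemma hasDerivAt_integral_mul_add_mul_sub {u p q : α → ℝ}
    (hp : Integrable (fun x => u x * p x) μ) (hpq : Integrable (fun x => u x * (q x - p x)) μ)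
    (t : ℝ) :
    HasDerivAt (fun s => ∫ x, u x * (p x + s * (q x - p x)) ∂μ)
      (∫ x, u x * (q x - p x) ∂μ) t := by
  have hlin : ∀ s, ∫ x, u x * (p x + s * (q x - p x)) ∂μ
      = ∫ x, u x * p x ∂μ + s * ∫ x, u x * (q x - p x) ∂μ := fun s => by
    rw [← integral_const_mul, ← integral_add hp (hpq.const_mul s)]
    congr 1 with x
    ring
  simp_rw [hlin]
  exact (hasDerivAt_mul_const _).const_add _

lemma integral_log_sub_log_mul_sub_nonneg {p q : α → ℝ} (hp : ∀ᵐ x ∂μ, 0 < p x)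
    (hq : ∀ᵐ x ∂μ, 0 < q x) : 0 ≤ ∫ x, (log (p x) - log (q x)) * (p x - q x) ∂μ :=
  integral_nonneg_of_ae (by
    filter_upwards [hp, hq] with x hpx hqx using log_sub_log_mul_sub_nonneg hpx hqx)

variable [IsFiniteMeasure μ] {p q : α → ℝ} {c C : ℝ}

lemma integrable_mul_of_memLp_top {f g : α → ℝ} (hf : MemLp f ∞ μ) (hg : MemLp g ∞ μ) :
    Integrable (fun x => f x * g x) μ :=
  (hg.mul hf).integrable le_top

lemma memLp_top_log_of_ae_mem_Icc (hc : 0 < c) (hpm : AEMeasurable p μ)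
    (hp : ∀ᵐ x ∂μ, p x ∈ Icc c C) : MemLp (fun x => log (p x)) ∞ μ :=
  memLp_of_bounded (hp.mono fun _ hx => ⟨log_le_log hc hx.1, log_le_log (hc.trans_le hx.1) hx.2⟩)
    (AEMeasurable.aestronglyMeasurable (by fun_prop)) ∞

theorem hasDerivAt_integral_mul_log_add_mul_sub (hc : 0 < c) (hpm : AEMeasurable p μ)
    (hqm : AEMeasurable q μ) (hp : ∀ᵐ x ∂μ, p x ∈ Icc c C) (hq : ∀ᵐ x ∂μ, q x ∈ Icc c C) :
    HasDerivAt (fun t => ∫ x, (p x + t * (q x - p x)) * log (p x + t * (q x - p x)) ∂μ)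
      (∫ x, (log (p x) + 1) * (q x - p x) ∂μ) 0 := by
  set s : Set ℝ := {t | |t| * C < c / 2}
  have hs : s ∈ 𝓝 0 :=
    (isOpen_lt (by fun_prop) continuous_const).mem_nhds (by simpa [s] using half_pos hc)
  have hseg : ∀ᵐ x ∂μ, ∀ t ∈ s, p x + t * (q x - p x) ∈ Icc (c / 2) (C + c / 2) := by
    filter_upwards [hp, hq] with x hpx hqx t ht using add_mul_sub_mem_Icc hc hpx hqx ht
  set K := max |log (c / 2)| |log (C + c / 2)|
  have hF₀ : Integrable (fun x => (p x + 0 * (q x - p x)) * log (p x + 0 * (q x - p x))) μ := by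
    refine .of_bound (AEMeasurable.aestronglyMeasurable (by fun_prop)) ((C + c / 2) * K) ?_
    filter_upwards [hseg] with x hx
    have hy := hx 0 (mem_of_mem_nhds hs)
    rw [norm_mul, norm_eq_abs, norm_eq_abs]
    exact mul_le_mul (abs_le.2 ⟨by linarith [hy.1, hy.2], hy.2⟩)
      (abs_log_le_of_mem_Icc (half_pos hc) hy) (abs_nonneg _) (by linarith [hy.1, hy.2])
  have hbound : ∀ᵐ x ∂μ, ∀ t ∈ s, ‖(log (p x + t * (q x - p x)) + 1) * (q x - p x)‖ ≤ (K + 1) * C := by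
    filter_upwards [hp, hq, hseg] with x hpx hqx hx t ht
    rw [norm_mul, norm_eq_abs, norm_eq_abs]
    refine mul_le_mul ((abs_add_le _ _).trans ?_) (abs_sub_le_iff.2 ⟨?_, ?_⟩) (abs_nonneg _) ?_
    · rw [abs_one]
      gcongr
      exact abs_log_le_of_mem_Icc (half_pos hc) (hx t ht)
    · linarith [hpx.1, hqx.2]
    · linarith [hqx.1, hpx.2]
    · positivity
  have hdiff : ∀ᵐ x ∂μ, ∀ t ∈ s, HasDerivAt
      (fun t => (p x + t * (q x - p x)) * log (p x + t * (q x - p x)))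
      ((log (p x + t * (q x - p x)) + 1) * (q x - p x)) t := by
    filter_upwards [hseg] with x hx t ht
    have hpos : p x + t * (q x - p x) ≠ 0 := by linarith [(hx t ht).1]
    exact (hasDerivAt_mul_log hpos).comp t ((hasDerivAt_mul_const (q x - p x)).const_add (p x))
  simpa using (hasDerivAt_integral_of_dominated_loc_of_deriv_le hs
    (.of_forall fun t => AEMeasurable.aestronglyMeasurable (by fun_prop)) hF₀
    (AEMeasurable.aestronglyMeasurable (by fun_prop)) hbound (integrable_const _) hdiff).2


theorem hasDerivAt_integral_mul_log_add_mul_sub_of_integral_eq (hc : 0 < c)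
    (hpm : AEMeasurable p μ) (hqm : AEMeasurable q μ) (hp : ∀ᵐ x ∂μ, p x ∈ Icc c C)
    (hq : ∀ᵐ x ∂μ, q x ∈ Icc c C) (hpq : ∫ x, p x ∂μ = ∫ x, q x ∂μ) :
    HasDerivAt (fun t => ∫ x, (p x + t * (q x - p x)) * log (p x + t * (q x - p x)) ∂μ)
      (∫ x, log (p x) * (q x - p x) ∂μ) 0 := by
  have hpb := memLp_of_bounded hp hpm.aestronglyMeasurable ∞
  have hqb := memLp_of_bounded hq hqm.aestronglyMeasurable ∞
  have hqp : Integrable (fun x => q x - p x) μ := (hqb.sub hpb).integrable le_top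
  have hlog : Integrable (fun x => log (p x) * (q x - p x)) μ :=
    integrable_mul_of_memLp_top (memLp_top_log_of_ae_mem_Icc hc hpm hp) (hqb.sub hpb)
  refine (hasDerivAt_integral_mul_log_add_mul_sub hc hpm hqm hp hq).congr_deriv ?_
  simp_rw [add_one_mul]
  rw [integral_add hlog hqp, integral_sub (hqb.integrable le_top) (hpb.integrable le_top), hpq,
    sub_self, add_zero]

theorem hasDerivAt_payoff_add_entropy_of_eq_mul_log {u : α → ℝ} {η κ : ℝ}
    (hu : ∀ᵐ x ∂μ, u x = η * log (q x) + κ) (hc : 0 < c) (hpm : AEMeasurable p μ)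
    (hqm : AEMeasurable q μ) (hp : ∀ᵐ x ∂μ, p x ∈ Icc c C) (hq : ∀ᵐ x ∂μ, q x ∈ Icc c C)
    (hpq : ∫ x, p x ∂μ = ∫ x, q x ∂μ) :
    HasDerivAt
      (fun t => ∫ x, u x * (p x + t * (q x - p x)) ∂μ +
        η * -∫ x, (p x + t * (q x - p x)) * log (p x + t * (q x - p x)) ∂μ)
      (η * ∫ x, (log (q x) - log (p x)) * (q x - p x) ∂μ) 0 := by
  have hpb := memLp_of_bounded hp hpm.aestronglyMeasurable ∞
  have hqb := memLp_of_bounded hq hqm.aestronglyMeasurable ∞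
  have hlogpb := memLp_top_log_of_ae_mem_Icc hc hpm hp
  have hlogqb := memLp_top_log_of_ae_mem_Icc hc hqm hq
  have hub : MemLp u ∞ μ :=
    ((hlogqb.const_mul η).add (memLp_const κ)).ae_eq (hu.mono fun _ hx => hx.symm)
  have hqp : Integrable (fun x => q x - p x) μ := (hqb.sub hpb).integrable le_top
  have hlogq : Integrable (fun x => log (q x) * (q x - p x)) μ :=
    integrable_mul_of_memLp_top hlogqb (hqb.sub hpb)
  have hlogp : Integrable (fun x => log (p x) * (q x - p x)) μ :=
    integrable_mul_of_memLp_top hlogpb (hqb.sub hpb)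
  have hgibbs : ∫ x, u x * (q x - p x) ∂μ = η * ∫ x, log (q x) * (q x - p x) ∂μ := by
    rw [integral_congr_ae (hu.mono fun x hx => by rw [hx, add_mul, mul_assoc]),
      integral_add (hlogq.const_mul η) (hqp.const_mul κ),
      integral_const_mul, integral_const_mul, integral_sub (hqb.integrable le_top)
        (hpb.integrable le_top), hpq, sub_self, mul_zero, add_zero]
  have hsplit : ∫ x, (log (q x) - log (p x)) * (q x - p x) ∂μ
      = ∫ x, log (q x) * (q x - p x) ∂μ - ∫ x, log (p x) * (q x - p x) ∂μ := by
    simp_rw [sub_mul (log _)]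
    exact integral_sub hlogq hlogp
  refine ((hasDerivAt_integral_mul_add_mul_sub (integrable_mul_of_memLp_top hub hpb)
    (integrable_mul_of_memLp_top hub (hqb.sub hpb)) 0).add
    ((hasDerivAt_integral_mul_log_add_mul_sub_of_integral_eq hc hpm hqm hp hq hpq).neg.const_mul
      η)).congr_deriv ?_
  rw [hgibbs, hsplit]
  ring

lemma integral_mul_log_div_add_integral_mul_log_div (hc : 0 < c) (hpm : AEMeasurable p μ)
    (hqm : AEMeasurable q μ) (hp : ∀ᵐ x ∂μ, p x ∈ Icc c C) (hq : ∀ᵐ x ∂μ, q x ∈ Icc c C) :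
    ∫ x, p x * log (p x / q x) ∂μ + ∫ x, q x * log (q x / p x) ∂μ
      = ∫ x, (log (p x) - log (q x)) * (p x - q x) ∂μ := by
  have hlogb :=
    (memLp_top_log_of_ae_mem_Icc hc hpm hp).sub (memLp_top_log_of_ae_mem_Icc hc hqm hq)
  have hp' : Integrable (fun x => (log (p x) - log (q x)) * p x) μ :=
    integrable_mul_of_memLp_top hlogb (memLp_of_bounded hp hpm.aestronglyMeasurable ∞)
  have hq' : Integrable (fun x => -((log (p x) - log (q x)) * q x)) μ :=
    (integrable_mul_of_memLp_top hlogb (memLp_of_bounded hq hqm.aestronglyMeasurable ∞)).neg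
  have hpq : (fun x => p x * log (p x / q x)) =ᵐ[μ] fun x => (log (p x) - log (q x)) * p x := by
    filter_upwards [hp, hq] with x hpx hqx
    rw [log_div (hc.trans_le hpx.1).ne' (hc.trans_le hqx.1).ne', mul_comm]
  have hqp : (fun x => q x * log (q x / p x)) =ᵐ[μ]
      fun x => -((log (p x) - log (q x)) * q x) := by
    filter_upwards [hp, hq] with x hpx hqx
    rw [log_div (hc.trans_le hqx.1).ne' (hc.trans_le hpx.1).ne']
    ring
  rw [integral_congr_ae hpq, integral_congr_ae hqp, ← integral_add hp' hq']
  congr 1 with x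
  ring

lemma integral_log_sub_log_mul_sub_eq_zero_iff (hc : 0 < c) (hpm : AEMeasurable p μ)
    (hqm : AEMeasurable q μ) (hp : ∀ᵐ x ∂μ, p x ∈ Icc c C) (hq : ∀ᵐ x ∂μ, q x ∈ Icc c C) :
    ∫ x, (log (p x) - log (q x)) * (p x - q x) ∂μ = 0 ↔ p =ᵐ[μ] q := by
  have hpos : ∀ᵐ x ∂μ, 0 < p x ∧ 0 < q x := by
    filter_upwards [hp, hq] with x hpx hqx using ⟨hc.trans_le hpx.1, hc.trans_le hqx.1⟩
  have hint : Integrable (fun x => (log (p x) - log (q x)) * (p x - q x)) μ :=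
    integrable_mul_of_memLp_top
      ((memLp_top_log_of_ae_mem_Icc hc hpm hp).sub (memLp_top_log_of_ae_mem_Icc hc hqm hq))
      ((memLp_of_bounded hp hpm.aestronglyMeasurable ∞).sub
        (memLp_of_bounded hq hqm.aestronglyMeasurable ∞))
  rw [integral_eq_zero_iff_of_nonneg_ae
    (hpos.mono fun x hx => log_sub_log_mul_sub_nonneg hx.1 hx.2) hint]
  exact eventually_congr (hpos.mono fun x hx => log_sub_log_mul_sub_eq_zero_iff hx.1 hx.2)

end Densities

section Logit

variable {a b η M : ℝ} {u : ℝ → ℝ}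

lemma integrableOn_exp_div (hη : 0 < η) (hu : Measurable u) (hbd : ∀ x ∈ Icc a b, |u x| ≤ M) :
    IntegrableOn (fun y => exp (u y / η)) (Icc a b) :=
  Integrable.of_mem_Icc _ _ (by fun_prop)
    (ae_restrict_of_forall_mem measurableSet_Icc fun x hx => exp_div_mem_Icc hη (hbd x hx))

lemma integral_exp_div_pos (hab : a < b) (hη : 0 < η) (hu : Measurable u)
    (hbd : ∀ x ∈ Icc a b, |u x| ≤ M) : 0 < ∫ y in Icc a b, exp (u y / η) := by
  have : NeZero (volume (Icc a b)) := ⟨by simpa using hab⟩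
  exact integral_exp_pos (integrableOn_exp_div hη hu hbd)

lemma integral_logitDensity (hZ : ∫ y in Icc a b, exp (u y / η) ≠ 0) :
    ∫ x in Icc a b, logitDensity a b η u x = 1 := by
  simp only [logitDensity]
  rw [integral_div, div_self hZ]

lemma log_logitDensity (hZ : ∫ y in Icc a b, exp (u y / η) ≠ 0) (x : ℝ) :
    log (logitDensity a b η u x) = u x / η - log (∫ y in Icc a b, exp (u y / η)) := by
  rw [logitDensity, log_div (exp_ne_zero _) hZ, log_exp]

lemma logitDensity_mem_Icc (hη : 0 < η) (hZ : 0 < ∫ y in Icc a b, exp (u y / η)) {x : ℝ}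
    (hx : |u x| ≤ M) :
    logitDensity a b η u x ∈ Icc (exp (-M / η) / ∫ y in Icc a b, exp (u y / η))
      (exp (M / η) / ∫ y in Icc a b, exp (u y / η)) :=
  ⟨div_le_div_of_nonneg_right (exp_div_mem_Icc hη hx).1 hZ.le,
    div_le_div_of_nonneg_right (exp_div_mem_Icc hη hx).2 hZ.le⟩

end Logit

/-- Let `u` be bounded measurable on `[a,b]` with logit density `l`, let `p` be a
class-`D` density, and set `p_t = p + t(l - p)` and
`f(t) = ∫ u p_t + η ν(p_t)` where `ν(p_t) = -∫ p_t log p_t`.  Then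
`f'(0) = η (KL(l‖p) + KL(p‖l)) ≥ 0`, with equality iff `p = l` Lebesgue-a.e. -/
theorem stmt_12 {a b η D M : ℝ} (hab : a < b) (hη : 0 < η) (hD : 1 ≤ D)
    {u : ℝ → ℝ} (humeas : Measurable u) (hbd : ∀ x ∈ Icc a b, |u x| ≤ M)
    {p : ℝ → ℝ} (hp : IsClassDDensity a b D p)
    (l : ℝ → ℝ) (hl : l = logitDensity a b η u) :
    HasDerivAt
        (fun t : ℝ =>
          (∫ x in Icc a b, u x * (p x + t * (l x - p x))) +
            η * -∫ x in Icc a b,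
              (p x + t * (l x - p x)) * Real.log (p x + t * (l x - p x)))
        (η * (klDiv' a b l p + klDiv' a b p l)) 0 ∧
      0 ≤ η * (klDiv' a b l p + klDiv' a b p l) ∧
      (η * (klDiv' a b l p + klDiv' a b p l) = 0 ↔
        p =ᵐ[volume.restrict (Icc a b)] l) := by
  obtain ⟨hpD, hpLip, hpint⟩ := hp
  have hZ := integral_exp_div_pos hab hη humeas hbd
  set Z := ∫ y in Icc a b, exp (u y / η)
  set c := min D⁻¹ (exp (-M / η) / Z)
  set C := max D (exp (M / η) / Z)
  have hc : 0 < c := lt_min (by positivity) (by positivity)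
  have hpC : ∀ᵐ x ∂volume.restrict (Icc a b), p x ∈ Icc c C :=
    ae_restrict_of_forall_mem measurableSet_Icc fun x hx =>
      Icc_subset_Icc (min_le_left _ _) (le_max_left _ _) (hpD x hx)
  have hlC : ∀ᵐ x ∂volume.restrict (Icc a b), l x ∈ Icc c C :=
    ae_restrict_of_forall_mem measurableSet_Icc fun x hx => hl ▸
      Icc_subset_Icc (min_le_right _ _) (le_max_right _ _) (logitDensity_mem_Icc hη hZ (hbd x hx))
  have hpm : AEMeasurable p (volume.restrict (Icc a b)) :=
    (LipschitzOnWith.of_dist_le' hpLip).continuousOn.aemeasurable measurableSet_Icc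
  have hlm : Measurable l := hl ▸ by unfold logitDensity; fun_prop
  have hmass : ∫ x in Icc a b, p x = ∫ x in Icc a b, l x := by
    rw [hpint, hl, integral_logitDensity hZ.ne']
  have hu : ∀ x, u x = η * log (l x) + η * log Z := fun x => by
    rw [hl, log_logitDensity hZ.ne']
    field_simp
    ring
  have hJ : klDiv' a b l p + klDiv' a b p l
      = ∫ x in Icc a b, (log (l x) - log (p x)) * (l x - p x) :=
    integral_mul_log_div_add_integral_mul_log_div hc hlm.aemeasurable hpm hlC hpC
  refine ⟨hJ ▸ hasDerivAt_payoff_add_entropy_of_eq_mul_log (ae_of_all _ hu) hc hpm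
    hlm.aemeasurable hpC hlC hmass, ?_, ?_⟩
  · exact mul_nonneg hη.le (hJ ▸ integral_log_sub_log_mul_sub_nonneg
      (hlC.mono fun x hx => hc.trans_le hx.1) (hpC.mono fun x hx => hc.trans_le hx.1))
  · rw [hJ, mul_eq_zero, or_iff_right hη.ne', eventuallyEq_comm]
    exact integral_log_sub_log_mul_sub_eq_zero_iff hc hlm.aemeasurable hpm hlC hpC
end

section
/- Let E be a real Banach space, let S ⊆ E be a nonempty closed convex set, let C > 0, let g : ℝ → E be continuous with g(s) ∈ S and ‖g(s)‖ ≤ C for all s ≥ 0, and let x : ℝ → E satisfy ‖x(0)‖ ≤ C and, for every t ≥ 0, HasDerivAt x (g(t) − x(t)) t. Then for every t > 0, the distance from x(t) to S satisfies inf_{y ∈ S} ‖x(t) − y‖ ≤ 2C e^{-t}. -/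
open MeasureTheory

lemma infDist_combo_aux {E : Type*} [NormedAddCommGroup E] [NormedSpace ℝ E]
    {S : Set E} (hSconv : Convex ℝ S) (hSne : S.Nonempty) {a b : E} (hb : b ∈ S)
    {h : ℝ} (h0 : 0 ≤ h) (h1 : h < 1) :
    Metric.infDist ((1 - h) • a + h • b) S ≤ (1 - h) * Metric.infDist a S := by
  have h1' : 0 < 1 - h := by linarith
  have : (1 - h)⁻¹ * Metric.infDist ((1 - h) • a + h • b) S ≤ Metric.infDist a S := by
    have : Nonempty S := hSne.to_subtype
    rw [show Metric.infDist a S = ⨅ y : S, dist a y from Metric.infDist_eq_iInf]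
    apply le_ciInf
    intro y
    rw [inv_mul_le_iff₀ h1']
    have hmem : (1 - h) • (y : E) + h • b ∈ S :=
      hSconv y.2 hb (by linarith) h0 (by ring)
    calc Metric.infDist ((1 - h) • a + h • b) S
        ≤ dist ((1 - h) • a + h • b) ((1 - h) • (y : E) + h • b) :=
          Metric.infDist_le_dist_of_mem hmem
      _ = (1 - h) * dist a y := by
          rw [dist_eq_norm, dist_eq_norm]
          have : (1 - h) • a + h • b - ((1 - h) • (y : E) + h • b)
              = (1 - h) • (a - y) := by
            rw [smul_sub]; abel
          rw [this, norm_smul, Real.norm_eq_abs, abs_of_pos h1']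
  calc Metric.infDist ((1 - h) • a + h • b) S
      = (1 - h) * ((1 - h)⁻¹ * Metric.infDist ((1 - h) • a + h • b) S) := by
        field_simp
    _ ≤ (1 - h) * Metric.infDist a S := by
        exact mul_le_mul_of_nonneg_left this h1'.le

/-- Let `S` be a nonempty closed convex subset of a Banach space `E`, let `C > 0`,
let `g : ℝ → E` be continuous with `g(s) ∈ S` and `‖g(s)‖ ≤ C` for all `s ≥ 0`, and
let `x : ℝ → E` satisfy `‖x(0)‖ ≤ C` and `x'(t) = g(t) - x(t)` for `t ≥ 0`.  Then
for every `t > 0`, `inf_{y ∈ S} ‖x(t) - y‖ ≤ 2 C e^{-t}`. -/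
theorem stmt_14 {E : Type*} [NormedAddCommGroup E] [NormedSpace ℝ E] [CompleteSpace E]
    (S : Set E) (hSne : S.Nonempty) (hScl : IsClosed S) (hSconv : Convex ℝ S)
    (C : ℝ) (hC : 0 < C) (g x : ℝ → E) (hg : Continuous g)
    (hgS : ∀ s : ℝ, 0 ≤ s → g s ∈ S) (hgC : ∀ s : ℝ, 0 ≤ s → ‖g s‖ ≤ C)
    (hx0 : ‖x 0‖ ≤ C) (hx : ∀ t : ℝ, 0 ≤ t → HasDerivAt x (g t - x t) t) :
    ∀ t : ℝ, 0 < t → Metric.infDist (x t) S ≤ 2 * C * Real.exp (-t) := by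
  intro t ht
  set f : ℝ → ℝ := fun s => Metric.infDist (x s) S with hf
  have hxc : ContinuousOn x (Set.Icc 0 t) := fun s hs =>
    ((hx s hs.1).continuousAt.continuousWithinAt)
  have hfc : ContinuousOn f (Set.Icc 0 t) :=
    (Metric.continuous_infDist_pt S).comp_continuousOn hxc
  have hslope : ∀ s ∈ Set.Ico (0:ℝ) t, ∀ r, -f s < r →
      ∃ᶠ z in nhdsWithin s (Set.Ioi s), (z - s)⁻¹ * (f z - f s) < r := by
    intro s hs r hr
    set c : ℝ := (r + f s) / 2 with hc
    have hcpos : 0 < c := by simp only [hc]; linarith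
    have hlo := (hasDerivAt_iff_isLittleO.1 (hx s hs.1)).bound hcpos
    have hev : ∀ᶠ z in nhdsWithin s (Set.Ioi s),
        (z - s)⁻¹ * (f z - f s) < r := by
      have h1 : ∀ᶠ z in nhdsWithin s (Set.Ioi s),
          ‖x z - x s - (z - s) • (g s - x s)‖ ≤ c * ‖z - s‖ :=
        (nhdsWithin_le_nhds hlo)
      have h2 : ∀ᶠ z in nhdsWithin s (Set.Ioi s), z ∈ Set.Ioo s (s + 1) := by
        apply Filter.eventually_of_mem
          (inter_mem_nhdsWithin (Set.Ioi s) (Metric.ball_mem_nhds s zero_lt_one))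
        intro z hz
        constructor
        · exact hz.1
        · have := hz.2
          rw [Metric.mem_ball, Real.dist_eq, abs_lt] at this
          linarith [this.1, this.2]
      filter_upwards [h1, h2] with z hz1 hz2
      set h : ℝ := z - s with hdef
      have hhpos : 0 < h := by simp only [hdef]; linarith [hz2.1]
      have hh1 : h < 1 := by simp only [hdef]; linarith [hz2.2]
      have hpe : x s + h • (g s - x s) = (1 - h) • x s + h • g s := by
        module
      have key : Metric.infDist ((1 - h) • x s + h • g s) S ≤ (1 - h) * f s :=
        infDist_combo_aux hSconv hSne (hgS s hs.1) hhpos.le hh1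
      have hdist : f z ≤ (1 - h) * f s + c * h := by
        calc f z ≤ Metric.infDist ((1 - h) • x s + h • g s) S
              + dist (x z) ((1 - h) • x s + h • g s) :=
              Metric.infDist_le_infDist_add_dist
          _ ≤ (1 - h) * f s + c * h := by
              apply add_le_add key
              rw [dist_eq_norm, ← hpe]
              have : x z - (x s + h • (g s - x s)) = x z - x s - (z - s) • (g s - x s) := by
                rw [← hdef]; abel
              rw [this]
              calc ‖x z - x s - (z - s) • (g s - x s)‖ ≤ c * ‖z - s‖ := hz1
                _ = c * h := by rw [← hdef, Real.norm_eq_abs, abs_of_pos hhpos]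
      have : (z - s)⁻¹ * (f z - f s) ≤ -f s + c := by
        rw [← hdef]
        rw [inv_mul_le_iff₀ hhpos]
        nlinarith [hdist]
      have hlt : -f s + c < r := by simp only [hc]; linarith
      linarith
    exact hev.frequently
  have hbound : ∀ s ∈ Set.Ico (0:ℝ) t, -f s ≤ (-1) * f s + 0 := by
    intro s _; simp
  have hinit : f 0 ≤ 2 * C := by
    calc f 0 ≤ dist (x 0) (g 0) := Metric.infDist_le_dist_of_mem (hgS 0 le_rfl)
      _ = ‖x 0 - g 0‖ := dist_eq_norm _ _
      _ ≤ ‖x 0‖ + ‖g 0‖ := norm_sub_le _ _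
      _ ≤ 2 * C := by linarith [hgC 0 le_rfl]
  have main := le_gronwallBound_of_liminf_deriv_right_le hfc hslope hinit hbound t
    (Set.right_mem_Icc.2 ht.le)
  rwa [gronwallBound_ε0, sub_zero, neg_one_mul] at main
end
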